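/- arXiv:1509.03571 — 2 statements merged into one kernel-verified Lean document; each statement's English description precedes it below -/
import Mathlib

section
/- For every natural number n, a(n) ≤ ∑_{λ ∈ Λ₂(n)} (ℓ(λ)! / ∏_{i=1}^{λ₁} k(λ,i)!) · X(ℓ(λ)), where the sum is over all partitions λ of n all of whose parts are at least 2, a(n) is the number of isomorphism classes of Anosov graphs on n vertices, and X(t) is the number of equivalence classes of t×t symmetric 0–1 matrices with pairwise distinct rows under simultaneous permutation of rows and columns. -/
/-- x ∼ y iff the open neighborhoods coincide or the closed neighborhoods coincide. -/
def simRel {V : Type*} (G : SimpleGraph V) (x y : V) : Prop :=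
  G.neighborSet x = G.neighborSet y ∨
    insert x (G.neighborSet x) = insert y (G.neighborSet y)

/-- A connected simple graph is Anosov if every ∼-class has at least two vertices and every
∼-class with exactly two vertices is edgeless. -/
def IsAnosov {V : Type*} (G : SimpleGraph V) : Prop :=
  G.Connected ∧
    (∀ x : V, 2 ≤ {y | simRel G x y}.ncard) ∧
    (∀ x y : V, {z | simRel G x z}.ncard = 2 → simRel G x y → ¬ G.Adj x y)

/-- Graphs on `Fin n` satisfying a property `P`, up to isomorphism. -/
def graphClassSetoid (n : ℕ) (P : SimpleGraph (Fin n) → Prop) :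
    Setoid {G : SimpleGraph (Fin n) // P G} where
  r G H := Nonempty (G.1 ≃g H.1)
  iseqv := ⟨fun _ => ⟨RelIso.refl _⟩, fun ⟨e⟩ => ⟨e.symm⟩, fun ⟨e⟩ ⟨f⟩ => ⟨e.trans f⟩⟩

/-- `a n`: the number of isomorphism classes of Anosov graphs on `n` vertices. -/
noncomputable def anosovCount (n : ℕ) : ℕ :=
  Nat.card (Quotient (graphClassSetoid n IsAnosov))

/-- `t × t` symmetric 0–1 matrices with pairwise distinct rows. -/
def SymDistinctMat (t : ℕ) : Type :=
  {A : Matrix (Fin t) (Fin t) (Fin 2) // A.IsSymm ∧ ∀ i j : Fin t, i ≠ j → ∃ n, A i n ≠ A j n}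

/-- Simultaneous permutation of rows and columns. -/
def matPermSetoid (t : ℕ) : Setoid (SymDistinctMat t) where
  r A B := ∃ σ : Equiv.Perm (Fin t), ∀ i j, B.1 i j = A.1 (σ i) (σ j)
  iseqv := by
    refine ⟨fun A => ⟨Equiv.refl _, fun i j => rfl⟩, ?_, ?_⟩
    · rintro A B ⟨σ, h⟩
      exact ⟨σ.symm, fun i j => by rw [h]; simp⟩
    · rintro A B C ⟨σ, h⟩ ⟨τ, h'⟩
      exact ⟨τ.trans σ, fun i j => by rw [h', h]; rfl⟩

/-- `X t`: the number of `t × t` symmetric 0–1 matrices with pairwise distinct rows, up to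
simultaneous permutation of rows and columns. -/
noncomputable def symDistinctCount (t : ℕ) : ℕ := Nat.card (Quotient (matPermSetoid t))

/-! Twins (`x ∼ y`) form classes that are either independent sets or cliques, and adjacency of
two distinct vertices depends only on their classes. Hence a graph is determined up to isomorphism
by the sizes of its `T` twin classes and the `T × T` symmetric 0–1 matrix of adjacencies between
and within classes, whose rows are distinct because distinct classes are not twins. For an Anosov
graph the class sizes form a partition `λ ∈ Λ₂(n)` with `ℓ(λ) = T`; once the matrix is fixed
up to simultaneous permutation (`X(T)` choices), the labelled sizes are one of the
`ℓ(λ)! / ∏ k(λ,i)!` arrangements of `λ`. -/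

section TwinRelation

variable {V : Type*} {G : SimpleGraph V} {a b x y z : V}

theorem not_adj_of_neighborSet_eq (h : G.neighborSet x = G.neighborSet y) : ¬ G.Adj x y :=
  fun hxy => G.irrefl (show x ∈ G.neighborSet x from h ▸ hxy.symm)

theorem adj_of_insert_neighborSet_eq
    (h : insert x (G.neighborSet x) = insert y (G.neighborSet y)) (hxy : x ≠ y) : G.Adj x y :=
  ((h ▸ Set.mem_insert x _ : x ∈ insert y (G.neighborSet y)).resolve_left hxy).symm

theorem eq_or_eq_of_neighborSet_eq_of_insert_eq (hxy : G.neighborSet x = G.neighborSet y)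
    (hyz : insert y (G.neighborSet y) = insert z (G.neighborSet z)) : x = y ∨ y = z := by
  by_contra! hne
  have hyz' : G.Adj y z := adj_of_insert_neighborSet_eq hyz hne.2
  have hxz : G.Adj x z := show z ∈ G.neighborSet x from hxy ▸ hyz'
  have hxy' : x ∈ insert y (G.neighborSet y) :=
    hyz ▸ Or.inr (show x ∈ G.neighborSet z from hxz.symm)
  exact not_adj_of_neighborSet_eq hxy (hxy'.resolve_left hne.1).symm

theorem simRel_refl (x : V) : simRel G x x := Or.inl rfl

theorem simRel_symm (h : simRel G x y) : simRel G y x := h.imp Eq.symm Eq.symm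

theorem simRel_trans (hxy : simRel G x y) (hyz : simRel G y z) : simRel G x z := by
  rcases hxy with hxy | hxy <;> rcases hyz with hyz | hyz
  · exact Or.inl (hxy.trans hyz)
  · rcases eq_or_eq_of_neighborSet_eq_of_insert_eq hxy hyz with rfl | rfl
    exacts [Or.inr hyz, Or.inl hxy]
  · rcases eq_or_eq_of_neighborSet_eq_of_insert_eq hyz.symm hxy.symm with rfl | rfl
    exacts [Or.inr hxy, Or.inl hyz]
  · exact Or.inr (hxy.trans hyz)

/-- Open twins if `x` and `y` are non-adjacent, closed twins otherwise. -/
theorem simRel_of_adj_iff (h : ∀ z, z ≠ x → z ≠ y → (G.Adj x z ↔ G.Adj y z)) :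
    simRel G x y := by
  by_cases hxy : G.Adj x y
  · refine Or.inr (Set.ext fun z => ?_)
    rcases eq_or_ne z x with rfl | hzx
    · simp [hxy.symm]
    rcases eq_or_ne z y with rfl | hzy
    · simp [hxy]
    simp [hzx, hzy, h z hzx hzy]
  · refine Or.inl (Set.ext fun z => ?_)
    rcases eq_or_ne z x with rfl | hzx
    · simpa [G.adj_comm] using hxy
    rcases eq_or_ne z y with rfl | hzy
    · simpa using hxy
    exact h z hzx hzy

theorem adj_of_simRel_left (hax : simRel G a x) (hab : G.Adj a b) (hxb : x ≠ b) : G.Adj x b := by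
  rcases hax with h | h
  · exact show b ∈ G.neighborSet x from h ▸ hab
  · exact ((show b ∈ insert x (G.neighborSet x) from h ▸ Or.inr hab).resolve_left hxb.symm)

theorem adj_of_simRel (hax : simRel G a x) (hby : simRel G b y) (hab : G.Adj a b)
    (hxy : x ≠ y) : G.Adj x y := by
  by_cases hxb : x = b
  · subst hxb
    exact (adj_of_simRel_left (simRel_trans hax hby) hab hxy.symm).symm
  · exact (adj_of_simRel_left hby (adj_of_simRel_left hax hab hxb).symm hxy.symm).symm

variable (G) in
def simSetoid : Setoid V := ⟨simRel G, ⟨simRel_refl, simRel_symm, simRel_trans⟩⟩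

end TwinRelation

theorem Nat.card_eq_sum_card_fiber {α β : Type*} [Finite α] [Fintype β] (f : α → β) :
    Nat.card α = ∑ b, Nat.card {a // f a = b} :=
  (Nat.card_congr (Equiv.sigmaFiberEquiv f)).symm.trans Nat.card_sigma

section TwinClass

variable {V W : Type*} {G : SimpleGraph V} {H : SimpleGraph W}

variable (G) in
abbrev TwinClass : Type _ := Quotient (simSetoid G)

open Classical in
variable (G) in
/-- The diagonal entry of a class records whether its twins are pairwise adjacent. -/
noncomputable def classAdj (q r : TwinClass G) : Fin 2 :=
  if ∃ x y, ⟦x⟧ = q ∧ ⟦y⟧ = r ∧ G.Adj x y then 1 else 0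

theorem classAdj_comm (q r : TwinClass G) : classAdj G q r = classAdj G r q := by
  unfold classAdj
  congr 1
  exact propext ⟨fun ⟨x, y, hx, hy, h⟩ => ⟨y, x, hy, hx, h.symm⟩,
    fun ⟨x, y, hx, hy, h⟩ => ⟨y, x, hy, hx, h.symm⟩⟩

theorem adj_iff_classAdj_eq_one {x y : V} (hxy : x ≠ y) :
    G.Adj x y ↔ classAdj G ⟦x⟧ ⟦y⟧ = 1 := by
  unfold classAdj
  constructor
  · exact fun h => if_pos ⟨x, y, rfl, rfl, h⟩
  · intro h
    obtain ⟨a, b, ha, hb, hab⟩ : ∃ a b, ⟦a⟧ = ⟦x⟧ ∧ ⟦b⟧ = ⟦y⟧ ∧ G.Adj a b := by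
      by_contra hn
      rw [if_neg hn] at h
      exact absurd h (by decide)
    exact adj_of_simRel (G := G) (Quotient.exact ha) (Quotient.exact hb) hab hxy

theorem classAdj_injective : Function.Injective (classAdj G) := by
  intro q r h
  rw [← q.out_eq, ← r.out_eq]
  refine Quotient.sound (simRel_of_adj_iff fun z hzq hzr => ?_)
  rw [adj_iff_classAdj_eq_one hzq.symm, adj_iff_classAdj_eq_one hzr.symm, q.out_eq, r.out_eq, h]

variable (G) in
noncomputable def classSize (q : TwinClass G) : ℕ := Nat.card {x // ⟦x⟧ = q}

theorem classSize_mk (x : V) : classSize G ⟦x⟧ = {y | simRel G x y}.ncard := by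
  rw [classSize, ← Nat.card_coe_set_eq]
  exact Nat.card_congr (Equiv.subtypeEquivRight fun y =>
    ⟨fun h => simRel_symm (Quotient.exact h), fun h => Quotient.sound (simRel_symm h)⟩)

noncomputable instance [Finite V] : Fintype (TwinClass G) := Fintype.ofFinite _

theorem sum_classSize [Finite V] : ∑ q, classSize G q = Nat.card V :=
  (Nat.card_eq_sum_card_fiber _).symm

theorem classSize_pos [Finite V] (q : TwinClass G) : 0 < classSize G q :=
  Nat.card_pos_iff.2 ⟨⟨⟨q.out, q.out_eq⟩⟩, inferInstance⟩

theorem nonempty_iso_of_twinClass_equiv [Finite V] [Finite W] (φ : TwinClass G ≃ TwinClass H)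
    (hsize : ∀ q, classSize H (φ q) = classSize G q)
    (hadj : ∀ q r, classAdj H (φ q) (φ r) = classAdj G q r) : Nonempty (G ≃g H) := by
  have hfiber (r : TwinClass H) : {x // φ ⟦x⟧ = r} ≃ {y // ⟦y⟧ = r} := by
    refine Classical.choice (Finite.card_eq.1 ?_)
    rw [Nat.card_congr (Equiv.subtypeEquivRight fun x => φ.eq_symm_apply.symm)]
    exact (φ.apply_symm_apply r ▸ hsize (φ.symm r)).symm
  let ψ : V ≃ W := Equiv.ofFiberEquiv hfiber
  have hψ (x : V) : ⟦ψ x⟧ = φ ⟦x⟧ := Equiv.ofFiberEquiv_map hfiber x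
  refine ⟨⟨ψ, fun {x y} => ?_⟩⟩
  rcases eq_or_ne x y with rfl | hxy
  · simp
  rw [adj_iff_classAdj_eq_one hxy, adj_iff_classAdj_eq_one (ψ.injective.ne hxy), hψ, hψ, hadj]

end TwinClass

section TwinMatrix

variable {V W : Type*} {G : SimpleGraph V} {H : SimpleGraph W} {T : ℕ}

instance : Finite (SymDistinctMat T) := by
  unfold SymDistinctMat
  infer_instance

variable (G) in
noncomputable def twinMatrix (e : Fin T ≃ TwinClass G) : SymDistinctMat T :=
  ⟨fun i j => classAdj G (e i) (e j),
    Matrix.IsSymm.ext fun i j => classAdj_comm (e j) (e i),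
    fun i j hij => by
      by_contra! h
      exact hij (e.injective (classAdj_injective (funext fun r => by simpa using h (e.symm r))))⟩

theorem exists_twinMatrix_eq {e : Fin T ≃ TwinClass G} {M : SymDistinctMat T}
    (h : (matPermSetoid T).r (twinMatrix G e) M) :
    ∃ e' : Fin T ≃ TwinClass G, twinMatrix G e' = M := by
  obtain ⟨σ, hσ⟩ := h
  exact ⟨σ.trans e, Subtype.ext (funext₂ fun i j => (hσ i j).symm)⟩

theorem nonempty_iso_of_twinMatrix_eq [Finite V] [Finite W] {e : Fin T ≃ TwinClass G}
    {e' : Fin T ≃ TwinClass H} (hM : twinMatrix G e = twinMatrix H e')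
    (hsize : ∀ i, classSize G (e i) = classSize H (e' i)) : Nonempty (G ≃g H) :=
  nonempty_iso_of_twinClass_equiv (e.symm.trans e')
    (fun q => by simpa using (hsize (e.symm q)).symm)
    fun q r => by
      simpa [twinMatrix] using
        (congrArg (fun M : SymDistinctMat T => M.1 (e.symm q) (e.symm r)) hM).symm

end TwinMatrix

section Arrangements

open MulAction

variable {α : Type*}

theorem Multiset.exists_univ_val_map_eq (m : Multiset α) :
    ∃ s : Fin (Multiset.card m) → α, Finset.univ.val.map s = m := by
  obtain ⟨l, rfl⟩ : ∃ l : List α, (l : Multiset α) = m := Quotient.exists_rep m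
  exact ⟨l.get, (Fin.univ_val_map l.get).trans (congrArg _ (List.ofFn_get l))⟩

theorem Multiset.count_univ_val_map [DecidableEq α] {ι : Type*} [Fintype ι] (s : ι → α)
    (b : α) :
    (Finset.univ.val.map s).count b = Nat.card {i // s i = b} := by
  rw [Multiset.count_map, Nat.card_eq_fintype_card, Fintype.card_subtype, Finset.card_def,
    Finset.filter_val]
  exact congrArg _ (Multiset.filter_congr fun _ _ => eq_comm)

theorem mem_orbit_domMulAct_iff {ι : Type*} [Fintype ι] {s₀ s : ι → α} :
    s ∈ orbit (Equiv.Perm ι)ᵈᵐᵃ s₀ ↔ Finset.univ.val.map s = Finset.univ.val.map s₀ := by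
  classical
  constructor
  · rintro ⟨g, rfl⟩
    obtain ⟨σ, rfl⟩ := DomMulAct.mk.surjective g
    change Finset.univ.val.map (s₀ ∘ σ) = _
    rw [← Multiset.map_map, Multiset.map_univ_val_equiv]
  · intro h
    have hfiber (b : α) : {i // s i = b} ≃ {i // s₀ i = b} :=
      Classical.choice <| Finite.card_eq.1 <| by
        rw [← Multiset.count_univ_val_map, h, Multiset.count_univ_val_map]
    exact ⟨DomMulAct.mk (Equiv.ofFiberEquiv hfiber), funext (Equiv.ofFiberEquiv_map hfiber)⟩

/-- Arrangements of the values of `s₀` form one orbit of `Sym(ι)`, whose stabilizers permute the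
positions of each value among themselves. -/
theorem card_rearrangements_mul_prod_factorial [DecidableEq α] {ι : Type*} [Fintype ι]
    (s₀ : ι → α) :
    Nat.card {s : ι → α // Finset.univ.val.map s = Finset.univ.val.map s₀} *
      ∏ a ∈ (Finset.univ.val.map s₀).toFinset, ((Finset.univ.val.map s₀).count a).factorial =
      (Fintype.card ι).factorial := by
  classical
  have horbit : Nat.card {s // Finset.univ.val.map s = Finset.univ.val.map s₀} =
      Nat.card (orbit (Equiv.Perm ι)ᵈᵐᵃ s₀) :=
    Nat.card_congr (Equiv.subtypeEquivRight fun s => mem_orbit_domMulAct_iff.symm)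
  have hstab : Nat.card (stabilizer (Equiv.Perm ι)ᵈᵐᵃ s₀) =
      ∏ a ∈ (Finset.univ.val.map s₀).toFinset, ((Finset.univ.val.map s₀).count a).factorial := by
    have e : {σ : Equiv.Perm ι // s₀ ∘ σ = s₀} ≃ stabilizer (Equiv.Perm ι)ᵈᵐᵃ s₀ :=
      DomMulAct.mk.subtypeEquiv fun σ => Iff.rfl
    rw [← Nat.card_congr e, Nat.card_eq_fintype_card, DomMulAct.stabilizer_card']
    exact Finset.prod_congr rfl fun a _ => by
      rw [Multiset.count_univ_val_map, Nat.card_eq_fintype_card]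
  rw [horbit, ← hstab, Nat.card_coe_set_eq, ← index_stabilizer, mul_comm,
    Subgroup.card_mul_index, Nat.card_congr DomMulAct.mk.symm, Nat.card_perm,
    Nat.card_eq_fintype_card]

theorem Multiset.card_arrangements_mul_prod_factorial [DecidableEq α] (m : Multiset α) :
    Nat.card {s : Fin (Multiset.card m) → α // Finset.univ.val.map s = m} *
      ∏ a ∈ m.toFinset, (m.count a).factorial = (Multiset.card m).factorial := by
  obtain ⟨s₀, hs₀⟩ := m.exists_univ_val_map_eq
  simpa [hs₀] using card_rearrangements_mul_prod_factorial s₀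

theorem prod_factorial_count_toFinset_eq_prod_Icc {m : Multiset ℕ} (hm : ∀ i ∈ m, 0 < i) :
    ∏ a ∈ m.toFinset, (m.count a).factorial =
      ∏ i ∈ Finset.Icc 1 m.sup, (m.count i).factorial := by
  refine Finset.prod_subset (fun i hi => ?_) fun i _ hi => ?_
  · rw [Multiset.mem_toFinset] at hi
    exact Finset.mem_Icc.2 ⟨hm i hi, Multiset.le_sup hi⟩
  · rw [Multiset.count_eq_zero.2 (by simpa using hi), Nat.factorial_zero]

theorem Multiset.card_arrangements_eq_factorial_div {m : Multiset ℕ} (hm : ∀ i ∈ m, 0 < i) :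
    Nat.card {s : Fin (Multiset.card m) → ℕ // Finset.univ.val.map s = m} =
      (Multiset.card m).factorial / ∏ i ∈ Finset.Icc 1 m.sup, (m.count i).factorial := by
  rw [← Multiset.card_arrangements_mul_prod_factorial,
    prod_factorial_count_toFinset_eq_prod_Icc hm, Nat.mul_div_cancel _ (Finset.prod_pos fun i _ => Nat.factorial_pos _)]

end Arrangements

section TwinPartition

variable {n T : ℕ}

noncomputable def twinPartition (G : SimpleGraph (Fin n)) : Nat.Partition n where
  parts := Finset.univ.val.map (classSize G)
  parts_pos hi := by
    obtain ⟨q, -, rfl⟩ := Multiset.mem_map.1 hi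
    exact classSize_pos q
  parts_sum := by
    rw [← Finset.sum_eq_multiset_sum, sum_classSize, Nat.card_eq_fintype_card, Fintype.card_fin]

theorem card_twinPartition_parts (G : SimpleGraph (Fin n)) :
    Multiset.card (twinPartition G).parts = Nat.card (TwinClass G) := by
  simp [twinPartition, Nat.card_eq_fintype_card]

theorem two_le_of_mem_twinPartition {G : SimpleGraph (Fin n)} (hG : IsAnosov G) :
    ∀ i ∈ (twinPartition G).parts, 2 ≤ i := by
  intro i hi
  obtain ⟨q, -, rfl⟩ := Multiset.mem_map.1 hi
  rw [← q.out_eq, classSize_mk]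
  exact hG.2.1 _

theorem univ_val_map_classSize_comp (G : SimpleGraph (Fin n)) (e : Fin T ≃ TwinClass G) :
    Finset.univ.val.map (classSize G ∘ e) = (twinPartition G).parts := by
  rw [← Multiset.map_map, Multiset.map_univ_val_equiv]
  rfl

theorem exists_twinMatrix_eq_out (G : SimpleGraph (Fin n))
    (hT : Nat.card (TwinClass G) = T) :
    ∃ e : Fin T ≃ TwinClass G, twinMatrix G e =
      (⟦twinMatrix G (Finite.equivFinOfCardEq hT).symm⟧ : Quotient (matPermSetoid T)).out :=
  exists_twinMatrix_eq ((matPermSetoid T).symm (Quotient.mk_out _))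

/-- Labelling the twin classes so that their matrix is the chosen representative of its
permutation class, a graph is determined up to isomorphism by that class and the labelled class
sizes. -/
theorem card_twinPartition_fiber_le (P : SimpleGraph (Fin n) → Prop) (p : Nat.Partition n) :
    Nat.card {c : Quotient (graphClassSetoid n P) // twinPartition c.out.1 = p} ≤
      Nat.card {s : Fin (Multiset.card p.parts) → ℕ // Finset.univ.val.map s = p.parts} *
        symDistinctCount (Multiset.card p.parts) := by
  set T := Multiset.card p.parts
  have hT (c : {c : Quotient (graphClassSetoid n P) // twinPartition c.out.1 = p}) :
      Nat.card (TwinClass c.1.out.1) = T := by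
    rw [← card_twinPartition_parts, c.2]
  choose e he using fun c => exists_twinMatrix_eq_out c.1.out.1 (hT c)
  let F (c : {c : Quotient (graphClassSetoid n P) // twinPartition c.out.1 = p}) :
      {s : Fin T → ℕ // Finset.univ.val.map s = p.parts} × Quotient (matPermSetoid T) :=
    (⟨classSize _ ∘ e c,
        (univ_val_map_classSize_comp _ _).trans (congrArg Nat.Partition.parts c.2)⟩,
      ⟦twinMatrix _ (Finite.equivFinOfCardEq (hT c)).symm⟧)
  have hF : F.Injective := by
    intro c c' h
    have hM : twinMatrix _ (e c) = twinMatrix _ (e c') :=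
      (he c).trans ((congrArg Quotient.out (congrArg Prod.snd h)).trans (he c').symm)
    have hsize (i : Fin T) : classSize _ (e c i) = classSize _ (e c' i) :=
      congrFun (congrArg (fun x => x.1.1) h) i
    exact Subtype.ext (Quotient.out_equiv_out.1 (nonempty_iso_of_twinMatrix_eq hM hsize))
  have : Finite {s : Fin T → ℕ // Finset.univ.val.map s = p.parts} :=
    Nat.finite_of_card_ne_zero <| left_ne_zero_of_mul <| by
      rw [p.parts.card_arrangements_mul_prod_factorial]
      exact Nat.factorial_ne_zero _
  exact (Nat.card_le_card_of_injective F hF).trans_eq (Nat.card_prod _ _)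

end TwinPartition

/-- `a(n) ≤ ∑_{λ ∈ Λ₂(n)} (ℓ(λ)!/∏_{i=1}^{λ₁} k(λ,i)!) · X(ℓ(λ))`. -/
theorem anosovCount_le_sum (n : ℕ) :
    anosovCount n ≤
      ∑ p ∈ Finset.univ.filter (fun p : Nat.Partition n => ∀ i ∈ p.parts, 2 ≤ i),
        (Nat.factorial p.parts.card /
            ∏ i ∈ Finset.Icc 1 p.parts.sup, Nat.factorial (p.parts.count i)) *
          symDistinctCount p.parts.card := by
  let fiber (p : Nat.Partition n) :=
    {c : Quotient (graphClassSetoid n IsAnosov) // twinPartition c.out.1 = p}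
  have hempty (p : Nat.Partition n) (hp : ¬ ∀ i ∈ p.parts, 2 ≤ i) : Nat.card (fiber p) = 0 :=
    Nat.card_eq_zero.2 (Or.inl ⟨fun c => hp (c.2 ▸ two_le_of_mem_twinPartition c.1.out.2)⟩)
  calc anosovCount n
      = ∑ p, Nat.card (fiber p) := Nat.card_eq_sum_card_fiber _
    _ = ∑ p ∈ Finset.univ.filter (fun p : Nat.Partition n => ∀ i ∈ p.parts, 2 ≤ i),
          Nat.card (fiber p) :=
        (Finset.sum_subset (Finset.filter_subset _ _) fun p _ hp =>
          hempty p (by simpa using hp)).symm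
    _ ≤ _ := Finset.sum_le_sum fun p _ => by
        rw [← Multiset.card_arrangements_eq_factorial_div fun i hi => p.parts_pos hi]
        exact card_twinPartition_fiber_le _ p
end

section
/- For every t ∈ ℕ with t ≥ 2, 2^{t−1}·(2^t − 1)·∏_{i=2}^{t−1} max(2^{t−i} − i, 1) ≤ X(t) · t!, where X(t) is the number of equivalence classes of t×t symmetric 0–1 matrices with pairwise distinct rows under simultaneous permutation of rows and columns. -/
/-!
A symmetric `t × t` 0–1 matrix is a function `Sym2 (Fin t) → Fin 2`. If its rows `i ≠ j` agree,
the function factors through the map `Sym2 (Fin t) → Sym2 {x // x ≠ i}` sending `i` to `j`, so at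
most `2 ^ C(t,2)` functions have these two rows equal; a union bound over the `C(t,2)` pairs leaves
at least `2 ^ C(t,2) * (2 ^ t - C(t,2))` matrices with distinct rows. Every equivalence class is an
orbit of `Perm (Fin t)`, hence has at most `t!` elements. For `t ≥ 3` the top factor of the product
is `1` and the others are at most `2 ^ (t - i)`, so the left side is at most
`2 ^ (C(t,2) - 1) * (2 ^ t - 1)`, which the count beats because `2 * C(t,2) ≤ 2 ^ t + 1`; for
`t = 2` both bounds equal `6`.
-/

open Finset

section DistinctRows

variable {α κ : Type*}

/-- A function `Sym2 α → κ` is read as the symmetric matrix `(i, j) ↦ g s(i, j)`. -/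
def HasDistinctRows (g : Sym2 α → κ) : Prop :=
  Pairwise fun i j => ∃ k, g s(i, k) ≠ g s(j, k)

def redirect [DecidableEq α] {i j : α} (hij : i ≠ j) (k : α) : {x // x ≠ i} :=
  if hk : k = i then ⟨j, hij.symm⟩ else ⟨k, hk⟩

lemma eq_comp_map_redirect [DecidableEq α] {g : Sym2 α → κ} {i j : α} (hij : i ≠ j)
    (hg : ∀ k, g s(i, k) = g s(j, k)) :
    g = (g ∘ Sym2.map Subtype.val) ∘ Sym2.map (redirect hij) := by
  have hfst : ∀ a b, g s(a, b) = g s((redirect hij a : α), b) := by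
    intro a b
    by_cases ha : a = i
    · subst ha; simp [redirect, hg]
    · simp [redirect, ha]
  funext z
  induction z using Sym2.ind with
  | _ a b =>
    simp only [Function.comp_apply, Sym2.map_mk]
    rw [hfst, Sym2.eq_swap, hfst, Sym2.eq_swap]

variable [Fintype α] [DecidableEq α] [Fintype κ] [DecidableEq κ]

instance : DecidablePred (@HasDistinctRows α κ) := fun g => by
  unfold HasDistinctRows Pairwise; infer_instance

lemma card_filter_rows_eq_le {i j : α} (hij : i ≠ j) :
    #{g : Sym2 α → κ | ∀ k, g s(i, k) = g s(j, k)} ≤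
      Fintype.card κ ^ (Fintype.card α).choose 2 := by
  have hsub : ({g | ∀ k, g s(i, k) = g s(j, k)} : Finset (Sym2 α → κ)) ⊆
      univ.image fun h : Sym2 {x // x ≠ i} → κ => h ∘ Sym2.map (redirect hij) :=
    fun g hg => mem_image.mpr
      ⟨g ∘ Sym2.map Subtype.val, mem_univ _, (eq_comp_map_redirect hij (by simpa using hg)).symm⟩
  have hα : 0 < Fintype.card α := Fintype.card_pos_iff.mpr ⟨i⟩
  calc _ ≤ _ := card_le_card hsub
    _ ≤ _ := card_image_le
    _ = _ := by
      rw [card_univ, Fintype.card_fun, Sym2.card]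
      simp [Nat.sub_add_cancel hα]

lemma card_pow_le_card_filter_hasDistinctRows_add :
    Fintype.card κ ^ Fintype.card (Sym2 α) ≤
      #{g : Sym2 α → κ | HasDistinctRows g} +
        (Fintype.card α).choose 2 * Fintype.card κ ^ (Fintype.card α).choose 2 := by
  let bad (s : Finset α) : Finset (Sym2 α → κ) :=
    {g | ∀ i ∈ s, ∀ j ∈ s, ∀ k, g s(i, k) = g s(j, k)}
  have hcover : ({g | ¬ HasDistinctRows g} : Finset (Sym2 α → κ)) ⊆
      (powersetCard 2 univ).biUnion bad := by
    intro g hg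
    obtain ⟨i, j, hij, hrow⟩ : ∃ i j, i ≠ j ∧ ∀ k, g s(i, k) = g s(j, k) := by
      simpa [HasDistinctRows, Pairwise] using hg
    refine mem_biUnion.mpr ⟨{i, j}, mem_powersetCard.mpr ⟨subset_univ _, card_pair hij⟩, ?_⟩
    simp [bad, hrow]
  have hbad : ∀ s ∈ powersetCard 2 (univ : Finset α),
      #(bad s) ≤ Fintype.card κ ^ (Fintype.card α).choose 2 := by
    intro s hs
    obtain ⟨i, j, hij, rfl⟩ := card_eq_two.mp (mem_powersetCard.mp hs).2
    refine le_trans (card_le_card fun g hg => ?_) (card_filter_rows_eq_le (κ := κ) hij)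
    simp only [bad, mem_filter, mem_univ, true_and] at hg ⊢
    exact hg i (by simp) j (by simp)
  calc Fintype.card κ ^ Fintype.card (Sym2 α)
      = #{g : Sym2 α → κ | HasDistinctRows g} + #{g : Sym2 α → κ | ¬ HasDistinctRows g} := by
        rw [card_filter_add_card_filter_not, card_univ, Fintype.card_fun]
    _ ≤ _ := by
        gcongr
        calc _ ≤ _ := card_le_card hcover
          _ ≤ _ := card_biUnion_le
          _ ≤ _ := sum_le_card_nsmul _ _ _ hbad
          _ = _ := by simp

end DistinctRows

def symDistinctMatEquiv (t : ℕ) :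
    SymDistinctMat t ≃ {g : Sym2 (Fin t) → Fin 2 // HasDistinctRows g} where
  toFun A := ⟨Sym2.lift ⟨A.1, fun i j => A.2.1.apply j i⟩, A.2.2⟩
  invFun g := ⟨fun i j => g.1 s(i, j), Matrix.ext fun _ _ => congrArg g.1 Sym2.eq_swap, g.2⟩
  left_inv _ := rfl
  right_inv g := Subtype.ext <| funext fun z => by induction z using Sym2.ind; rfl

instance (t : ℕ) : Finite (SymDistinctMat t) := .of_equiv _ (symDistinctMatEquiv t).symm

lemma two_pow_le_card_symDistinctMat (t : ℕ) :
    2 ^ (t + t.choose 2) ≤ Nat.card (SymDistinctMat t) + t.choose 2 * 2 ^ t.choose 2 := by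
  have h := card_pow_le_card_filter_hasDistinctRows_add (α := Fin t) (κ := Fin 2)
  rwa [Sym2.card, Fintype.card_fin, Fintype.card_fin, Nat.choose_succ_succ, Nat.choose_one_right,
    ← Fintype.card_subtype, ← Nat.card_eq_fintype_card, ← Nat.card_congr (symDistinctMatEquiv t)] at h

lemma Setoid.card_le_card_quotient_mul {α G : Type*} (s : Setoid α) [Finite (Quotient s)]
    [Finite G] (act : G → α → α) (hact : ∀ a b, s a b → ∃ g, act g a = b) :
    Nat.card α ≤ Nat.card (Quotient s) * Nat.card G := by
  rw [← Nat.card_prod]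
  refine Nat.card_le_card_of_surjective (fun p : Quotient s × G => act p.2 p.1.out) fun b => ?_
  obtain ⟨g, hg⟩ := hact _ b (Quotient.mk_out b)
  exact ⟨(⟦b⟧, g), hg⟩

def SymDistinctMat.permute {t : ℕ} (σ : Equiv.Perm (Fin t)) (A : SymDistinctMat t) :
    SymDistinctMat t :=
  ⟨A.1.submatrix σ σ, A.2.1.submatrix σ, fun i j hij => by
    obtain ⟨n, hn⟩ := A.2.2 (σ i) (σ j) (σ.injective.ne hij)
    exact ⟨σ.symm n, by simpa using hn⟩⟩

lemma card_symDistinctMat_le (t : ℕ) :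
    Nat.card (SymDistinctMat t) ≤ symDistinctCount t * t.factorial := by
  simpa [symDistinctCount, Fintype.card_perm] using
    (matPermSetoid t).card_le_card_quotient_mul SymDistinctMat.permute
      fun _ _ ⟨σ, h⟩ => ⟨σ, Subtype.ext <| Matrix.ext fun i j => (h i j).symm⟩

lemma sum_Icc_two_sub_add (n : ℕ) :
    ∑ i ∈ Icc 2 (n + 1), (n + 3 - i) + (n + 3) = (n + 3).choose 2 := by
  induction n with
  | zero => rfl
  | succ n ih =>
    have hshift : ∑ i ∈ Icc 2 (n + 1), (n + 1 + 3 - i) = ∑ i ∈ Icc 2 (n + 1), (n + 3 - i) + n :=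
      calc _ = ∑ i ∈ Icc 2 (n + 1), ((n + 3 - i) + 1) :=
            sum_congr rfl fun i hi => by have := (mem_Icc.mp hi).2; omega
        _ = _ := by rw [sum_add_distrib, sum_const, Nat.card_Icc, smul_eq_mul, mul_one]; rfl
    rw [sum_Icc_succ_top (by omega), hshift, Nat.choose_succ_succ' (n + 3), ← ih,
      Nat.choose_one_right]
    omega

lemma two_pow_mul_prod_le {t : ℕ} (ht : 3 ≤ t) :
    (2 : ℤ) ^ t * ∏ i ∈ Icc 2 (t - 1), max ((2 : ℤ) ^ (t - i) - i) 1 ≤ 2 ^ t.choose 2 := by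
  obtain ⟨n, rfl⟩ : ∃ n, t = n + 3 := ⟨t - 3, by omega⟩
  have htop : max ((2 : ℤ) ^ (n + 3 - (n + 2)) - (n + 2 : ℕ)) 1 = 1 :=
    max_eq_right (by rw [show n + 3 - (n + 2) = 1 by omega]; push_cast; linarith)
  calc (2 : ℤ) ^ (n + 3) * ∏ i ∈ Icc 2 (n + 3 - 1), max ((2 : ℤ) ^ (n + 3 - i) - i) 1
      = 2 ^ (n + 3) * ∏ i ∈ Icc 2 (n + 1), max ((2 : ℤ) ^ (n + 3 - i) - i) 1 := by
        rw [show n + 3 - 1 = n + 1 + 1 by omega, prod_Icc_succ_top (by omega), htop, mul_one]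
    _ ≤ 2 ^ (n + 3) * ∏ i ∈ Icc 2 (n + 1), (2 : ℤ) ^ (n + 3 - i) := by
        gcongr with i
        exact max_le (sub_le_self _ (by positivity)) (one_le_pow₀ one_le_two)
    _ = 2 ^ (n + 3).choose 2 := by
        rw [prod_pow_eq_pow_sum, ← pow_add, add_comm, sum_Icc_two_sub_add]

lemma two_mul_choose_two_le (t : ℕ) : 2 * t.choose 2 ≤ 2 ^ t + 1 := by
  induction t with
  | zero => simp
  | succ t ih =>
    have h : 2 * t ≤ 2 ^ t := by
      rcases t with _ | t
      · simp
      · have := Nat.lt_two_pow_self (n := t); rw [pow_succ]; omega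
    rw [Nat.choose_succ_succ', Nat.choose_one_right, pow_succ]
    simp only [Nat.reduceAdd]
    omega

/-- `2^{t−1}·(2^t − 1)·∏_{i=2}^{t−1} max(2^{t−i} − i, 1) ≤ X(t)·t!`. -/
theorem strong_lower_bound_symDistinctCount (t : ℕ) (ht : 2 ≤ t) :
    (2 : ℤ) ^ (t - 1) * (2 ^ t - 1) *
        ∏ i ∈ Finset.Icc 2 (t - 1), max ((2 : ℤ) ^ (t - i) - (i : ℤ)) 1 ≤
      (symDistinctCount t * Nat.factorial t : ℕ) := by
  have hcount : (2 : ℤ) ^ t * 2 ^ t.choose 2 ≤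
      Nat.card (SymDistinctMat t) + t.choose 2 * 2 ^ t.choose 2 := by
    rw [← pow_add]; exact_mod_cast two_pow_le_card_symDistinctMat t
  refine le_trans ?_ (Nat.cast_le.mpr (card_symDistinctMat_le t))
  rcases ht.eq_or_lt with rfl | ht3
  · norm_num at hcount ⊢
    linarith
  have hchoose : 2 * (t.choose 2 : ℤ) ≤ 2 ^ t + 1 := by exact_mod_cast two_mul_choose_two_le t
  have hpos : (0 : ℤ) ≤ 2 ^ t - 1 := sub_nonneg.mpr (one_le_pow₀ one_le_two)
  suffices 2 * ((2 : ℤ) ^ (t - 1) * (2 ^ t - 1) *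
      ∏ i ∈ Icc 2 (t - 1), max ((2 : ℤ) ^ (t - i) - i) 1) ≤ 2 * Nat.card (SymDistinctMat t) by
    linarith
  calc _ = (2 ^ t - 1) * (2 ^ t * ∏ i ∈ Icc 2 (t - 1), max ((2 : ℤ) ^ (t - i) - i) 1) := by
        rw [← pow_sub_one_mul (by omega : t ≠ 0)]; ring
    _ ≤ (2 ^ t - 1) * 2 ^ t.choose 2 := by gcongr; exact two_pow_mul_prod_le ht3
    _ ≤ (2 * 2 ^ t - 2 * t.choose 2) * 2 ^ t.choose 2 :=
        mul_le_mul_of_nonneg_right (by linarith) (by positivity)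
    _ ≤ _ := by linarith
end
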